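/- For every natural number n and all integers t and m, 5·∑_{j=1}^n (−F_{m−3})^{n−j}·(F_{m+2})^j·G_{j+t−1}·G_{j+t}·G_{j+t+1}·G_{j+t+2}·G_{j+t+m} = F_{m+2}^{n+1}·G_{n+t−1}·G_{n+t}·G_{n+t+1}·G_{n+t+2}·G_{n+t+3} − (−1)^n·F_{m−3}^n·F_{m+2}·G_{t−1}·G_t·G_{t+1}·G_{t+2}·G_{t+3}. -/

import Mathlib

/-!
Both sides of `5 G(k + m) = F(m + 2) G(k + 3) + F(m - 3) G(k - 2)` are gibonacci sequences in `m`,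
so this identity only has to be checked at `m = 0, 1`. Applied with `k = j + t`, it writes the
`j`-th summand, times 5, as `b^(n-j) a^j (a P(j) - b P(j-1))` with `a = F(m+2)`, `b = -F(m-3)` and
`P(i) = G(i+t-1) ⋯ G(i+t+3)`, and this sum telescopes to `a^(n+1) P(n) - b^n a P(0)`.
-/

def IsGibonacci {M : Type*} [Add M] (G : ℤ → M) : Prop :=
  ∀ k : ℤ, G (k + 2) = G (k + 1) + G k

namespace IsGibonacci

variable {M : Type*}

theorem ext [AddCancelCommMonoid M] {f g : ℤ → M} (hf : IsGibonacci f) (hg : IsGibonacci g)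
    (h0 : f 0 = g 0) (h1 : f 1 = g 1) : f = g := by
  have step : ∀ k : ℤ, f k = g k ∧ f (k + 1) = g (k + 1) := by
    intro k
    induction k using Int.induction_on with
    | zero => exact ⟨h0, h1⟩
    | succ i ih =>
      refine ⟨ih.2, ?_⟩
      rw [add_assoc, show (1 : ℤ) + 1 = 2 from rfl, hf, hg, ih.1, ih.2]
    | pred i ih =>
      refine ⟨?_, by rw [sub_add_cancel]; exact ih.1⟩
      have hfi := hf (-i - 1)
      have hgi := hg (-i - 1)
      rw [show -(i : ℤ) - 1 + 2 = -i + 1 by ring, show -(i : ℤ) - 1 + 1 = -i by ring] at hfi hgi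
      rw [ih.1, ih.2] at hfi
      exact add_left_cancel (hfi.symm.trans hgi)
  exact funext fun k => (step k).1

theorem comp_add_const [Add M] {G : ℤ → M} (hG : IsGibonacci G) (c : ℤ) :
    IsGibonacci fun k => G (k + c) := fun k => by
  simpa only [add_right_comm k 2 c, add_right_comm k 1 c] using hG (k + c)

theorem add [AddCommSemigroup M] {f g : ℤ → M} (hf : IsGibonacci f) (hg : IsGibonacci g) :
    IsGibonacci (f + g) := fun k => by
  simp only [Pi.add_apply, hf k, hg k]
  ac_rfl

theorem mul_const [NonUnitalNonAssocSemiring M] {G : ℤ → M} (hG : IsGibonacci G) (c : M) :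
    IsGibonacci fun k => G k * c := fun k => by
  simp only [hG k, add_mul]

theorem const_mul [NonUnitalNonAssocSemiring M] {G : ℤ → M} (hG : IsGibonacci G) (c : M) :
    IsGibonacci fun k => c * G k := fun k => by
  simp only [hG k, mul_add]

theorem five_mul_add {F G : ℤ → ℤ} (hF : IsGibonacci F) (hF0 : F 0 = 0) (hF1 : F 1 = 1)
    (hG : IsGibonacci G) (k m : ℤ) :
    5 * G (m + k) = F (m + 2) * G (k + 3) + F (m - 3) * G (k - 2) := by
  have hF2 : F 2 = 1 := by linear_combination (norm := ring_nf) hF 0 + hF1 + hF0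
  have hF3 : F 3 = 2 := by linear_combination (norm := ring_nf) hF 1 + hF2 + hF1
  have hFm1 : F (-1) = 1 := by linear_combination (norm := ring_nf) -hF (-1) + hF1 - hF0
  have hFm2 : F (-2) = -1 := by linear_combination (norm := ring_nf) -hF (-2) + hF0 - hFm1
  have hFm3 : F (-3) = 2 := by linear_combination (norm := ring_nf) -hF (-3) + hFm1 - hFm2
  refine congrFun (ext (f := fun m => 5 * G (m + k))
    (g := fun m => F (m + 2) * G (k + 3) + F (m - 3) * G (k - 2))
    ((hG.comp_add_const k).const_mul 5)
    (((hF.comp_add_const 2).mul_const _).add ((hF.comp_add_const (-3)).mul_const _)) ?_ ?_) m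
  · linear_combination (norm := ring_nf) -G (k + 3) * hF2 - G (k - 2) * hFm3 - hG (k + 1) - hG k
      - 2 * hG (k - 1) + 2 * hG (k - 2)
  · linear_combination (norm := ring_nf) -G (k + 3) * hF3 - G (k - 2) * hFm2 - 2 * hG (k + 1)
      - 2 * hG k + hG (k - 1) - hG (k - 2)

end IsGibonacci

theorem Finset.sum_Icc_pow_mul_pow_mul_sub {R : Type*} [CommRing R] (a b : R) (x : ℤ → R) (n : ℕ) :
    ∑ j ∈ Icc 1 n, b ^ (n - j) * a ^ j * (a * x j - b * x (j - 1)) =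
      a ^ (n + 1) * x n - b ^ n * a * x 0 := by
  induction n with
  | zero => simp
  | succ n ih =>
    have hshift : ∀ j ∈ Icc 1 n, b ^ (n + 1 - j) * a ^ j * (a * x j - b * x (j - 1)) =
        b * (b ^ (n - j) * a ^ j * (a * x j - b * x (j - 1))) := fun j hj => by
      rw [Nat.sub_add_comm (mem_Icc.1 hj).2, pow_succ]
      ring
    rw [sum_Icc_succ_top (by omega), sum_congr rfl hshift, ← mul_sum, ih]
    simp only [Nat.sub_self, pow_zero, Nat.cast_add, Nat.cast_one, add_sub_cancel_right]
    ring

theorem weighted_sum_products_lambda_free (F : ℤ → ℤ) (hF0 : F 0 = 0) (hF1 : F 1 = 1)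
    (hF : ∀ k : ℤ, F (k + 2) = F (k + 1) + F k)
    (G : ℤ → ℤ) (hG : ∀ k : ℤ, G (k + 2) = G (k + 1) + G k) (n : ℕ) (t m : ℤ) :
    5 * ∑ j ∈ Finset.Icc 1 n,
        (-F (m - 3)) ^ (n - j) * F (m + 2) ^ j *
          (G ((j : ℤ) + t - 1) * G ((j : ℤ) + t) * G ((j : ℤ) + t + 1) * G ((j : ℤ) + t + 2) *
            G ((j : ℤ) + t + m)) =
      F (m + 2) ^ (n + 1) *
          (G ((n : ℤ) + t - 1) * G ((n : ℤ) + t) * G ((n : ℤ) + t + 1) * G ((n : ℤ) + t + 2) *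
            G ((n : ℤ) + t + 3)) -
        (-1 : ℤ) ^ n * F (m - 3) ^ n * F (m + 2) *
          (G (t - 1) * G t * G (t + 1) * G (t + 2) * G (t + 3)) := by
  set P : ℤ → ℤ := fun i => G (i + t - 1) * G (i + t) * G (i + t + 1) * G (i + t + 2) * G (i + t + 3)
    with hP
  have hterm (j : ℕ) : 5 * ((-F (m - 3)) ^ (n - j) * F (m + 2) ^ j *
      (G ((j : ℤ) + t - 1) * G ((j : ℤ) + t) * G ((j : ℤ) + t + 1) * G ((j : ℤ) + t + 2) *
        G ((j : ℤ) + t + m))) =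
      (-F (m - 3)) ^ (n - j) * F (m + 2) ^ j * (F (m + 2) * P j - (-F (m - 3)) * P (j - 1)) := by
    simp only [hP]
    linear_combination (norm := ring_nf) (-F (m - 3)) ^ (n - j) * F (m + 2) ^ j *
      (G ((j : ℤ) + t - 1) * G ((j : ℤ) + t) * G ((j : ℤ) + t + 1) * G ((j : ℤ) + t + 2)) *
      IsGibonacci.five_mul_add hF hF0 hF1 hG (j + t) m
  rw [Finset.mul_sum, Finset.sum_congr rfl fun j _ => hterm j,
    Finset.sum_Icc_pow_mul_pow_mul_sub, hP, neg_pow]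
  simp only [zero_add]
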